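/- Non-degeneracy of [·,·]_{[*]}: if t ≠ 0 and q_t is a scaled hypercomplex matrix such that Tr(p_t^{[*]} q_t) = 0 for all scaled hypercomplex matrices p_t, then q_t = 0. Moreover the form is symmetric: Tr(p_t^{[*]} q_t) = Tr(q_t^{[*]} p_t) = 2 Re(ac + t·conj(b)·conj(d)) where q_t ↔ (a,b), p_t ↔ (c,d). -/

import Mathlib

open Matrix

noncomputable section

/-- The scaled hypercomplex matrix `q_t = [[a, tb],[conj b, conj a]]`. -/
def qt (t : ℝ) (a b : ℂ) : Matrix (Fin 2) (Fin 2) ℂ :=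
  !![a, (t : ℂ) * b; (starRingEnd ℂ) b, (starRingEnd ℂ) a]

/-- The `[*]`-adjoint `q_t^{[*]} = [[a, t·conj b],[b, conj a]]`. -/
def bstar (t : ℝ) (a b : ℂ) : Matrix (Fin 2) (Fin 2) ℂ :=
  !![a, (t : ℂ) * (starRingEnd ℂ) b; b, (starRingEnd ℂ) a]

theorem qt_zero (t : ℝ) : qt t 0 0 = 0 := by
  rw [eta_fin_two (0 : Matrix (Fin 2) (Fin 2) ℂ)]
  simp [qt]

theorem trace_bstar_mul_qt (t : ℝ) (a b c d : ℂ) :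
    (bstar t c d * qt t a b).trace =
      ((2 * (a * c + (t : ℂ) * (starRingEnd ℂ) b * (starRingEnd ℂ) d).re : ℝ) : ℂ) := by
  rw [← Complex.add_conj]
  simp only [bstar, qt, mul_fin_two, trace_fin_two_of, map_add, map_mul, Complex.conj_conj,
    Complex.conj_ofReal]
  ring

theorem trace_bstar_mul_qt_comm (t : ℝ) (a b c d : ℂ) :
    (bstar t c d * qt t a b).trace = (bstar t a b * qt t c d).trace := by
  simp only [trace_bstar_mul_qt]
  ring_nf

/-- Testing against `(c, d) = (conj a, 0)` and `(0, conj b)` gives `2 |a|²` and `2 t |b|²`. -/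
theorem eq_zero_of_trace_bstar_mul_qt_eq_zero {t : ℝ} (ht : t ≠ 0) {a b : ℂ}
    (h : ∀ c d : ℂ, (bstar t c d * qt t a b).trace = 0) : a = 0 ∧ b = 0 := by
  have ha : 2 * Complex.normSq a = 0 := by
    simpa [trace_bstar_mul_qt, Complex.mul_conj] using h ((starRingEnd ℂ) a) 0
  have hb : 2 * (t * Complex.normSq b) = 0 := by
    simpa [trace_bstar_mul_qt, mul_assoc, ← Complex.normSq_eq_conj_mul_self]
      using h 0 ((starRingEnd ℂ) b)
  simpa [ht] using And.intro ha hb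

/-- Non-degeneracy, symmetry and explicit value of the `[*]`-form for `t ≠ 0`. -/
theorem stmt13 (t : ℝ) (ht : t ≠ 0) (a b : ℂ) :
    ((∀ c d : ℂ, (bstar t c d * qt t a b).trace = 0) → qt t a b = 0) ∧
    (∀ c d : ℂ,
      (bstar t c d * qt t a b).trace = (bstar t a b * qt t c d).trace ∧
      (bstar t c d * qt t a b).trace =
        ((2 * (a * c + (t : ℂ) * (starRingEnd ℂ) b * (starRingEnd ℂ) d).re : ℝ) : ℂ)) := by
  refine ⟨fun h => ?_, fun c d => ⟨trace_bstar_mul_qt_comm t a b c d, trace_bstar_mul_qt t a b c d⟩⟩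
  obtain ⟨rfl, rfl⟩ := eq_zero_of_trace_bstar_mul_qt_eq_zero ht h
  exact qt_zero t
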